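/- Let (S,+) be a countable adequate commutative partial semigroup and let ⟨x_n⟩_{n=1}^∞ be an adequate sequence in S. Then there exists an idempotent ultrafilter p (i.e. p+p = p) with p ∈ ⋂_{m=1}^∞ cl(FS(⟨x_n⟩_{n=m}^∞)) ∩ δS. -/

import Mathlib

/-!
For `q ∈ δS` the sum `p + q` is the ultrafilter `p.bind (x ↦ x + q)`, where `x + q` is the
image of `q` under `y ↦ x + y`; written this way it is visibly an ultrafilter and continuous
in `p`. Associativity of `+` on `S` passes to `δS`, which is closed in `βS`, so any nonempty
closed subset of `δS` closed under `+` contains an idempotent by the Ellis–Numakura lemma.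
Take the set of `p ∈ δS` containing every tail `FS(⟨x_n⟩_{n=m}^∞)`: the tails are nested and,
by adequacy of the sequence, eventually inside each `φ(s)`, so this set is nonempty; and it
is closed under `+` because a finite sum from indices `≥ m` followed by one from indices
beyond them is again one from indices `≥ m`.
-/

namespace PS

variable {S : Type*}

/-- Left-to-right sum of a list in a partial semigroup (`none` on the empty list). -/
def listSum (P : S → S → Option S) : List S → Option S
  | [] => none
  | [a] => some a
  | a :: b :: l => (listSum P (b :: l)).bind fun t => P a t

/-- The partial sum `∑_{t ∈ H} y t`, taken in increasing order of the indices. -/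
def fsum (P : S → S → Option S) (y : ℕ → S) (H : Finset ℕ) : Option S :=
  listSum P ((H.sort (· ≤ ·)).map y)

/-- Associativity of a partial operation, in the strong (Kleene) sense. -/
def Assoc (P : S → S → Option S) : Prop :=
  ∀ a b c : S, (P a b).bind (fun t => P t c) = (P b c).bind fun t => P a t

/-- Commutativity: `a + b = b + a` whenever either side is defined. -/
def Comm (P : S → S → Option S) : Prop := ∀ a b : S, P a b = P b a

/-- `φ(s) = {t : s + t is defined}`. -/
def phi (P : S → S → Option S) (s : S) : Set S := {t | (P s t).isSome}

/-- `σ(H) = ⋂_{s ∈ H} φ(s)`. -/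
def sigma (P : S → S → Option S) (H : Finset S) : Set S :=
  {t | ∀ s ∈ H, (P s t).isSome = true}

/-- An adequate partial semigroup: `σ(H) ≠ ∅` for all finite nonempty `H`. -/
def Adequate (P : S → S → Option S) : Prop :=
  ∀ H : Finset S, H.Nonempty → (sigma P H).Nonempty

/-- `FS(⟨x_n⟩_{n=m}^∞)`. -/
def FSfrom (P : S → S → Option S) (x : ℕ → S) (m : ℕ) : Set S :=
  {s | ∃ H : Finset ℕ, H.Nonempty ∧ (∀ n ∈ H, m ≤ n) ∧ fsum P x H = some s}

/-- `FS` of the first `m` terms of a sequence. -/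
def FSfin (P : S → S → Option S) (x : ℕ → S) (m : ℕ) : Set S :=
  {s | ∃ H : Finset ℕ, H.Nonempty ∧ H ⊆ Finset.range m ∧ fsum P x H = some s}

/-- An adequate sequence. -/
def AdequateSeq (P : S → S → Option S) (x : ℕ → S) : Prop :=
  (∀ F : Finset ℕ, F.Nonempty → (fsum P x F).isSome = true) ∧
  (∀ F : Finset S, F.Nonempty → ∃ m : ℕ, FSfrom P x m ⊆ sigma P F)

/-- `δS ⊆ βS`. -/
def deltaS (P : S → S → Option S) : Set (Ultrafilter S) :=
  {p | ∀ s : S, phi P s ∈ p}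

/-- `-x + A = {y ∈ φ(x) : x + y ∈ A}`. -/
def shift (P : S → S → Option S) (x : S) (A : Set S) : Set S :=
  {y | ∃ z ∈ A, P x y = some z}

/-- `IsSum P r p q` expresses that `r = p + q` in `δS`:
`A ∈ p + q` iff `{x : -x + A ∈ q} ∈ p`. -/
def IsSum (P : S → S → Option S) (r p q : Ultrafilter S) : Prop :=
  ∀ A : Set S, A ∈ r ↔ {x : S | shift P x A ∈ q} ∈ p

/-- A finite product subsystem `⟨y_n⟩_{n<m}` of `FS(⟨x_n⟩_{n=k}^∞)`. -/
def IsProdSubsysFin (P : S → S → Option S) (x : ℕ → S) (k m : ℕ) (y : ℕ → S) : Prop :=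
  ∃ H : ℕ → Finset ℕ,
    (∀ n < m, (H n).Nonempty) ∧
    (∀ t ∈ H 0, k ≤ t) ∧
    (∀ n, n + 1 < m → ∀ s ∈ H n, ∀ t ∈ H (n + 1), s < t) ∧
    (∀ n < m, fsum P x (H n) = some (y n))

/-- An infinite product subsystem `⟨y_n⟩_{n=0}^∞` of `FS(⟨x_n⟩_{n=k}^∞)`. -/
def IsProdSubsysInf (P : S → S → Option S) (x : ℕ → S) (k : ℕ) (y : ℕ → S) : Prop :=
  ∃ H : ℕ → Finset ℕ,
    (∀ n, (H n).Nonempty) ∧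
    (∀ t ∈ H 0, k ≤ t) ∧
    (∀ n, ∀ s ∈ H n, ∀ t ∈ H (n + 1), s < t) ∧
    (∀ n, fsum P x (H n) = some (y n))

/-- `⟨x_n⟩_{n<m}` is a weak product subsystem of `⟨y_n⟩_{n=k}^∞`, witnessed by `H`. -/
def IsWPSWith (P : S → S → Option S) (y : ℕ → S) (k m : ℕ) (x : ℕ → S)
    (H : ℕ → Finset ℕ) : Prop :=
  (∀ n < m, (H n).Nonempty) ∧
  (∀ n < m, ∀ t ∈ H n, k ≤ t) ∧
  (∀ n₁ < m, ∀ n₂ < m, n₁ ≠ n₂ → Disjoint (H n₁) (H n₂)) ∧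
  (∀ n < m, fsum P y (H n) = some (x n))

/-- `⟨x_n⟩_{n<m}` is a weak product subsystem of `⟨y_n⟩_{n=k}^∞`. -/
def IsWPS (P : S → S → Option S) (y : ℕ → S) (k m : ℕ) (x : ℕ → S) : Prop :=
  ∃ H : ℕ → Finset ℕ, IsWPSWith P y k m x H

/-- The coordinatewise partial operation on a finite product, defined exactly when
every coordinate operation is defined. -/
def prodOp {l : ℕ} {T : Fin l → Type*} (P : ∀ i, T i → T i → Option (T i)) :
    (∀ i, T i) → (∀ i, T i) → Option (∀ i, T i) := fun a b =>
  if h : ∀ i, (P i (a i) (b i)).isSome then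
    some fun i => (P i (a i) (b i)).get (h i)
  else none

end PS

namespace PS

variable {S : Type*} (P : S → S → Option S)

theorem shift_univ (x : S) : shift P x Set.univ = phi P x := by
  ext y
  simp [shift, phi, Option.isSome_iff_exists]

theorem shift_eq_phi_inter_preimage (x : S) (A : Set S) :
    shift P x A = phi P x ∩ (fun y => (P x y).getD x) ⁻¹' A := by
  ext y
  simp only [shift, phi, Set.mem_inter_iff, Set.mem_preimage, Set.mem_ofPred_eq]
  cases P x y <;> simp

theorem shift_shift (hassoc : Assoc P) {w y z : S} (h : P w y = some z) (A : Set S) :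
    shift P y (shift P w A) = shift P z A := by
  ext u
  have key := hassoc w y u
  rw [h, Option.bind_some] at key
  constructor
  · rintro ⟨v, ⟨a, ha, hwv⟩, hyu⟩
    rw [hyu, Option.bind_some, hwv] at key
    exact ⟨a, ha, key⟩
  · rintro ⟨a, ha, hzu⟩
    rw [hzu] at key
    cases hyu : P y u with
    | none => simp [hyu] at key
    | some v =>
      rw [hyu, Option.bind_some] at key
      exact ⟨v, ⟨a, ha, key.symm⟩, hyu⟩

theorem shift_phi (hassoc : Assoc P) {s w t : S} (h : P s w = some t) :
    shift P w (phi P s) = phi P t := by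
  rw [← shift_univ, shift_shift P hassoc h, shift_univ]

theorem shift_setOf_shift_mem (hassoc : Assoc P) (w : S) (A : Set S) (r : Ultrafilter S) :
    shift P w {x | shift P x A ∈ r} = phi P w ∩ {y | shift P y (shift P w A) ∈ r} := by
  ext y
  constructor
  · rintro ⟨z, hz, hwy⟩
    refine ⟨Option.isSome_iff_exists.mpr ⟨z, hwy⟩, ?_⟩
    change shift P y (shift P w A) ∈ r
    rwa [shift_shift P hassoc hwy]
  · rintro ⟨hy, hyA⟩
    obtain ⟨z, hwy⟩ := Option.isSome_iff_exists.mp hy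
    refine ⟨z, ?_, hwy⟩
    change shift P z A ∈ r
    rwa [← shift_shift P hassoc hwy]

/-- `x + q`; the default value of `getD` is irrelevant as soon as `φ(x) ∈ q`. -/
def translate (x : S) (q : Ultrafilter S) : Ultrafilter S :=
  q.map fun y => (P x y).getD x

def add (p q : Ultrafilter S) : Ultrafilter S :=
  p.bind fun x => translate P x q

theorem mem_translate {x : S} {q : Ultrafilter S} (hq : phi P x ∈ q) {A : Set S} :
    A ∈ translate P x q ↔ shift P x A ∈ q := by
  rw [translate, Ultrafilter.mem_map, shift_eq_phi_inter_preimage]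
  exact (Filter.inter_mem_iff.trans (and_iff_right hq)).symm

theorem mem_add {p q : Ultrafilter S} (hq : q ∈ deltaS P) {A : Set S} :
    A ∈ add P p q ↔ {x | shift P x A ∈ q} ∈ p := by
  change {x | A ∈ translate P x q} ∈ p ↔ _
  simp only [mem_translate P (hq _)]

theorem isSum_add {p q : Ultrafilter S} (hq : q ∈ deltaS P) : IsSum P (add P p q) p q :=
  fun _ => mem_add P hq

theorem continuous_add_left (q : Ultrafilter S) : Continuous fun p => add P p q :=
  ultrafilterBasis_is_basis.continuous_iff.2 <| Set.forall_mem_range.mpr fun A =>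
    ultrafilter_isOpen_basic {x | A ∈ translate P x q}

theorem add_mem_deltaS (hassoc : Assoc P) {p q : Ultrafilter S} (hp : p ∈ deltaS P)
    (hq : q ∈ deltaS P) : add P p q ∈ deltaS P := by
  intro s
  rw [mem_add P hq]
  refine Filter.mem_of_superset (hp s) fun w hw => ?_
  obtain ⟨t, ht⟩ := Option.isSome_iff_exists.mp hw
  simpa only [Set.mem_ofPred_eq, shift_phi P hassoc ht] using hq t

theorem add_assoc (hassoc : Assoc P) (p : Ultrafilter S) {q r : Ultrafilter S}
    (hq : q ∈ deltaS P) (hr : r ∈ deltaS P) :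
    add P (add P p q) r = add P p (add P q r) := by
  have hphi (w : S) (B : Set S) : phi P w ∩ B ∈ q ↔ B ∈ q :=
    Filter.inter_mem_iff.trans (and_iff_right (hq w))
  ext A
  simp only [mem_add P hr, mem_add P hq, mem_add P (add_mem_deltaS P hassoc hq hr),
    shift_setOf_shift_mem P hassoc, hphi]

theorem exists_add_self_eq (hassoc : Assoc P) {T : Set (Ultrafilter S)} (hT : T.Nonempty)
    (hTc : IsClosed T) (hTδ : T ⊆ deltaS P) (hTadd : ∀ p ∈ T, ∀ q ∈ T, add P p q ∈ T) :
    ∃ p ∈ T, add P p p = p := by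
  let _ : Semigroup T :=
    { mul := fun p q => ⟨add P p q, hTadd _ p.2 _ q.2⟩
      mul_assoc := fun p q r => Subtype.ext (add_assoc P hassoc p (hTδ q.2) (hTδ r.2)) }
  have : CompactSpace T := isCompact_iff_compactSpace.mp hTc.isCompact
  have : Nonempty T := hT.to_subtype
  obtain ⟨⟨p, hp⟩, hpp⟩ := exists_idempotent_of_compact_t2_of_continuous_mul_left fun r : T =>
    ((continuous_add_left P r.1).comp continuous_subtype_val).subtype_mk _
  exact ⟨p, hp, congrArg Subtype.val hpp⟩

theorem listSum_cons (a : S) {l : List S} (hl : l ≠ []) :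
    listSum P (a :: l) = (listSum P l).bind fun t => P a t := by
  cases l with
  | nil => exact absurd rfl hl
  | cons b l => rfl

theorem listSum_append (hassoc : Assoc P) :
    ∀ (l₁ l₂ : List S), l₁ ≠ [] → l₂ ≠ [] →
    listSum P (l₁ ++ l₂) = (listSum P l₂).bind fun b => (listSum P l₁).bind fun a => P a b
  | [], _, h, _ => absurd rfl h
  | [a], l₂, _, h₂ => listSum_cons P a h₂
  | a :: b :: l, l₂, _, h₂ => by
    rw [List.cons_append, listSum_cons P a (by simp),
      listSum_append hassoc (b :: l) l₂ (by simp) h₂, listSum_cons P a (by simp)]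
    cases listSum P l₂ with
    | none => rfl
    | some c =>
      cases listSum P (b :: l) with
      | none => rfl
      | some d => exact (hassoc a d c).symm

theorem _root_.Finset.sort_union_of_forall_lt {α : Type*} [LinearOrder α] {H K : Finset α}
    (hlt : ∀ s ∈ H, ∀ t ∈ K, s < t) :
    (H ∪ K).sort (· ≤ ·) = H.sort (· ≤ ·) ++ K.sort (· ≤ ·) := by
  have hd : Disjoint H K :=
    Finset.disjoint_left.mpr fun {a} ha hk => lt_irrefl a (hlt a ha a hk)
  apply List.Perm.eq_of_pairwise' (Finset.pairwise_sort _ _)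
  · exact List.pairwise_append.mpr ⟨Finset.pairwise_sort _ _, Finset.pairwise_sort _ _,
      fun a ha b hb => (hlt a (Finset.mem_sort _ |>.mp ha) b (Finset.mem_sort _ |>.mp hb)).le⟩
  · rw [← Multiset.coe_eq_coe, ← Multiset.coe_add, Finset.sort_eq, Finset.sort_eq,
      Finset.sort_eq, ← Finset.disjUnion_eq_union H K hd, Finset.disjUnion_val]

theorem fsum_union (hassoc : Assoc P) (x : ℕ → S) {H K : Finset ℕ}
    (hH : H.Nonempty) (hK : K.Nonempty) (hlt : ∀ s ∈ H, ∀ t ∈ K, s < t) :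
    fsum P x (H ∪ K) = (fsum P x K).bind fun b => (fsum P x H).bind fun a => P a b := by
  unfold fsum
  rw [Finset.sort_union_of_forall_lt hlt, List.map_append]
  exact listSum_append P hassoc _ _
    (List.ne_nil_of_length_pos (by simpa using hH.card_pos))
    (List.ne_nil_of_length_pos (by simpa using hK.card_pos))

theorem fsum_singleton (x : ℕ → S) (n : ℕ) : fsum P x {n} = some (x n) := by
  rw [fsum, Finset.sort_singleton]
  rfl

theorem mem_FSfrom_self (x : ℕ → S) (m : ℕ) : x m ∈ FSfrom P x m :=
  ⟨{m}, Finset.singleton_nonempty m, by simp, fsum_singleton P x m⟩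

theorem FSfrom_anti (x : ℕ → S) : Antitone (FSfrom P x) :=
  fun _ _ h _ ⟨H, hne, hge, hsum⟩ => ⟨H, hne, fun n hn => h.trans (hge n hn), hsum⟩

theorem AdequateSeq.exists_FSfrom_subset_phi {x : ℕ → S} (hx : AdequateSeq P x) (s : S) :
    ∃ m, FSfrom P x m ⊆ phi P s := by
  obtain ⟨m, hm⟩ := hx.2 {s} (Finset.singleton_nonempty s)
  exact ⟨m, fun y hy => hm hy s (Finset.mem_singleton_self s)⟩

theorem FSfrom_subset_shift (hassoc : Assoc P) {x : ℕ → S}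
    (hx : ∀ F : Finset ℕ, F.Nonempty → (fsum P x F).isSome = true) {m : ℕ} {H : Finset ℕ}
    (hH : H.Nonempty) (hHm : ∀ n ∈ H, m ≤ n) {a : S} (ha : fsum P x H = some a) :
    FSfrom P x (H.max' hH + 1) ⊆ shift P a (FSfrom P x m) := by
  rintro b ⟨K, hK, hKm, hb⟩
  have hlt : ∀ s ∈ H, ∀ t ∈ K, s < t := fun s hs t ht =>
    (H.le_max' s hs).trans_lt (hKm t ht)
  have hHK : (H ∪ K).Nonempty := hH.mono Finset.subset_union_left
  obtain ⟨c, hc⟩ := Option.isSome_iff_exists.mp (hx (H ∪ K) hHK)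
  have hsum := fsum_union P hassoc x hH hK hlt
  rw [hc, hb, ha, Option.bind_some, Option.bind_some] at hsum
  refine ⟨c, ⟨H ∪ K, hHK, fun n hn => ?_, hc⟩, hsum.symm⟩
  rcases Finset.mem_union.mp hn with hn | hn
  · exact hHm n hn
  · exact (hHm _ (H.max'_mem hH)).trans (hlt _ (H.max'_mem hH) n hn).le

theorem FSfrom_mem_add (hassoc : Assoc P) {x : ℕ → S}
    (hx : ∀ F : Finset ℕ, F.Nonempty → (fsum P x F).isSome = true)
    {p q : Ultrafilter S} (hq : q ∈ deltaS P)
    (hpx : ∀ m, FSfrom P x m ∈ p) (hqx : ∀ m, FSfrom P x m ∈ q) (m : ℕ) :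
    FSfrom P x m ∈ add P p q := by
  rw [mem_add P hq]
  refine Filter.mem_of_superset (hpx m) ?_
  rintro a ⟨H, hH, hHm, ha⟩
  exact Filter.mem_of_superset (hqx _) (FSfrom_subset_shift P hassoc hx hH hHm ha)

theorem exists_ultrafilter_FSfrom_mem_of_subset_phi {x : ℕ → S}
    (hx : ∀ s, ∃ m, FSfrom P x m ⊆ phi P s) :
    ∃ u : Ultrafilter S, (∀ m, FSfrom P x m ∈ u) ∧ u ∈ deltaS P := by
  let F := ⨅ m, Filter.principal (FSfrom P x m)
  have : F.NeBot := Filter.iInf_neBot_of_directed'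
    (Filter.monotone_principal.comp_antitone (FSfrom_anti P x)).directed_ge
    fun m => Filter.principal_neBot_iff.mpr ⟨x m, mem_FSfrom_self P x m⟩
  have hF (m : ℕ) : FSfrom P x m ∈ F := Filter.mem_iInf_of_mem m (Filter.mem_principal_self _)
  refine ⟨Ultrafilter.of F, fun m => Ultrafilter.of_le F (hF m), fun s => ?_⟩
  obtain ⟨m, hm⟩ := hx s
  exact Ultrafilter.of_le F (Filter.mem_of_superset (hF m) hm)

end PS

theorem statement2_general {S : Type*} (P : S → S → Option S)
    (hassoc : PS.Assoc P)
    (x : ℕ → S) (hx : PS.AdequateSeq P x) :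
    ∃ p : Ultrafilter S, (∀ m : ℕ, PS.FSfrom P x m ∈ p) ∧ p ∈ PS.deltaS P ∧
      PS.IsSum P p p p := by
  let T := {p : Ultrafilter S | (∀ m, PS.FSfrom P x m ∈ p) ∧ p ∈ PS.deltaS P}
  have hT : T.Nonempty :=
    PS.exists_ultrafilter_FSfrom_mem_of_subset_phi P (hx.exists_FSfrom_subset_phi P)
  have hTclosed : IsClosed T := by
    simp only [T, PS.deltaS, Set.ofPred_and, Set.ofPred_forall]
    exact (isClosed_iInter fun m => ultrafilter_isClosed_basic _).inter
      (isClosed_iInter fun s => ultrafilter_isClosed_basic (PS.phi P s))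
  have hTadd : ∀ p ∈ T, ∀ q ∈ T, PS.add P p q ∈ T := fun p hp q hq =>
    ⟨PS.FSfrom_mem_add P hassoc hx.1 hq.2 hp.1 hq.1, PS.add_mem_deltaS P hassoc hp.2 hq.2⟩
  obtain ⟨p, ⟨hpx, hpδ⟩, hpp⟩ :=
    PS.exists_add_self_eq P hassoc hT hTclosed (fun _ hp => hp.2) hTadd
  have hsum := PS.isSum_add P (p := p) hpδ
  rw [hpp] at hsum
  exact ⟨p, hpx, hpδ, hsum⟩

/-- There is an idempotent ultrafilter
`p ∈ ⋂_m cl(FS(⟨x_n⟩_{n=m}^∞)) ∩ δS`. -/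
theorem statement2 {S : Type*} [Countable S] (P : S → S → Option S)
    (hassoc : PS.Assoc P) (hcomm : PS.Comm P) (hadeq : PS.Adequate P)
    (x : ℕ → S) (hx : PS.AdequateSeq P x) :
    ∃ p : Ultrafilter S, (∀ m : ℕ, PS.FSfrom P x m ∈ p) ∧ p ∈ PS.deltaS P ∧
      PS.IsSum P p p p :=
  statement2_general P hassoc x hx
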